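/- arXiv:1609.04780 — 3 statements merged into one kernel-verified Lean document; each statement's English description precedes it below -/
import Mathlib

section
/- For every integer j ≥ 2, the polynomial identity (u + 2)·G_j = f_{2j} + 2j holds in ℤ[u]. -/
open Polynomial

/-- `f 0 = 0`, `f 1 = 1`, `f (j+2) = X * f (j+1) - f j`. -/
noncomputable def f : ℕ → Polynomial ℤ
  | 0 => 0
  | 1 => 1
  | (j + 2) => X * f (j + 1) - f j

/-- `g j = f j - f (j-1)`. -/
noncomputable def g (j : ℕ) : Polynomial ℤ := f j - f (j - 1)

/-- `G j = g_{j+1}' * g_j - g_{j+1} * g_j'`. -/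
noncomputable def G (j : ℕ) : Polynomial ℤ :=
  derivative (g (j + 1)) * g j - g (j + 1) * derivative (g j)

lemma f_rec (j : ℕ) : f (j + 2) = X * f (j + 1) - f j := rfl

lemma f_zero : f 0 = 0 := rfl
lemma f_one : f 1 = 1 := rfl

/-- Cassini-type identity. -/
lemma f_cassini (j : ℕ) : f (j + 2) * f j = f (j + 1) ^ 2 - 1 := by
  induction j with
  | zero => simp [f_rec, f_zero, f_one]
  | succ k ih =>
    have h1 : f (k + 1 + 2) = X * f (k + 2) - f (k + 1) := f_rec (k + 1)
    have h2 : f (k + 2) = X * f (k + 1) - f k := f_rec k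
    rw [h1]
    linear_combination ih - f (k + 2) * h2

/-- Addition formula. -/
lemma f_add (m : ℕ) : ∀ n, f (m + n + 1) = f (m + 1) * f (n + 1) - f m * f n := by
  intro n
  induction n using Nat.twoStepInduction with
  | zero => simp [f_one, f_zero]
  | one =>
    have h : f (m + 2) = X * f (m + 1) - f m := f_rec m
    have h2 : f 2 = X := by have := f_rec 0; simpa [f_one, f_zero] using this
    rw [show m + 1 + 1 = m + 2 from rfl, h, h2, f_one]
    ring
  | more n ih1 ih2 =>
    have h1 : f (m + (n + 2) + 1) = X * f (m + n + 2) - f (m + n + 1) := by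
      rw [show m + (n + 2) + 1 = (m + n + 1) + 2 by ring]
      exact f_rec (m + n + 1)
    have h2 : f (n + 3) = X * f (n + 2) - f (n + 1) := f_rec (n + 1)
    have h3 : f (n + 2) = X * f (n + 1) - f n := f_rec n
    have ih2' : f (m + n + 2) = f (m + 1) * f (n + 2) - f m * f (n + 1) := by
      rw [show m + n + 2 = m + (n + 1) + 1 by ring]; exact ih2
    rw [h1, ih2', ih1, show n + 2 + 1 = n + 3 from rfl, h2, h3]
    ring

/-- Doubling. -/
lemma f_double (k : ℕ) : f (2 * (k + 1)) = f (k + 1) * (f (k + 2) - f k) := by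
  have h := f_add (k + 1) k
  rw [show k + 1 + k + 1 = 2 * (k + 1) by ring] at h
  rw [h]; ring

lemma square_lemma (k : ℕ) :
    (X + C 2) * g (k + 2) ^ 2 = f (2 * (k + 2)) - f (2 * (k + 1)) + 2 := by
  have hg : g (k + 2) = f (k + 2) - f (k + 1) := rfl
  have hd1 : f (2 * (k + 2)) = f (k + 2) * (f (k + 3) - f (k + 1)) := f_double (k + 1)
  have hd2 : f (2 * (k + 1)) = f (k + 1) * (f (k + 2) - f k) := f_double k
  have h3 : f (k + 3) = X * f (k + 2) - f (k + 1) := f_rec (k + 1)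
  have h2 : f (k + 2) = X * f (k + 1) - f k := f_rec k
  have hc : f (k + 2) * f k = f (k + 1) ^ 2 - 1 := f_cassini k
  rw [hg, hd1, hd2, h3, map_ofNat C 2]
  linear_combination (2 * f (k + 2) - f (k + 1)) * h2 - 2 * hc

lemma g_rec (j : ℕ) : g (j + 3) = X * g (j + 2) - g (j + 1) := by
  simp only [g, show j + 3 - 1 = j + 2 from rfl, show j + 2 - 1 = j + 1 from rfl,
    show j + 1 - 1 = j from rfl]
  have h1 : f (j + 3) = X * f (j + 2) - f (j + 1) := f_rec (j + 1)
  have h2 : f (j + 2) = X * f (j + 1) - f j := f_rec j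
  rw [h1, h2]; ring

lemma G_rec (j : ℕ) : G (j + 2) = G (j + 1) + g (j + 2) ^ 2 := by
  have h := g_rec j
  have hd : derivative (g (j + 3)) =
      g (j + 2) + X * derivative (g (j + 2)) - derivative (g (j + 1)) := by
    rw [h]; simp [derivative_mul]
  simp only [G, show j + 2 + 1 = j + 3 from rfl, show j + 1 + 1 = j + 2 from rfl]
  rw [hd, h]; ring

theorem G_identity (j : ℕ) (hj : 2 ≤ j) :
    (X + C 2) * G j = f (2 * j) + C (2 * j : ℤ) := by
  induction j, hj using Nat.le_induction with
  | base =>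
    have f2 : f 2 = X := by have := f_rec 0; simpa [f_one, f_zero] using this
    have f3 : f 3 = X ^ 2 - 1 := by
      have h := f_rec 1; rw [show (1:ℕ) + 2 = 3 from rfl] at h; rw [h, f2, f_one]; ring
    have f4 : f 4 = X ^ 3 - 2 * X := by
      have h := f_rec 2; rw [show (2:ℕ) + 2 = 4 from rfl] at h; rw [h, f3, f2]; ring
    have g2 : g 2 = X - 1 := by
      simp only [g, show (2:ℕ) - 1 = 1 from rfl, f2, f_one]
    have g3 : g 3 = X ^ 2 - X - 1 := by
      simp only [g, show (3:ℕ) - 1 = 2 from rfl, f3, f2]; ring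
    simp only [G, show (2:ℕ) + 1 = 3 from rfl, g2, g3,
      show (2:ℕ) * 2 = 4 from rfl, f4]
    simp only [derivative_sub, derivative_X_pow, derivative_X, derivative_one]
    rw [show ((2:ℕ):ℤ) = 2 by norm_num]
    rw [show (C (2 * 2 : ℤ) : Polynomial ℤ) = 4 by norm_num]
    rw [map_ofNat C 2]
    push_cast
    ring
  | succ n hn ih =>
    obtain ⟨k, rfl⟩ : ∃ k, n = k + 2 := ⟨n - 2, by omega⟩
    have hG := G_rec (k + 1)
    have hsq := square_lemma (k + 1)
    have hC : (C (2 * ((k + 2 + 1 : ℕ) : ℤ)) : Polynomial ℤ)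
        = C (2 * ((k + 2 : ℕ) : ℤ)) + 2 := by
      push_cast
      rw [show (2:ℤ) * ((k:ℤ) + 2 + 1) = 2 * ((k:ℤ) + 2) + 2 by ring, C_add]
      norm_num
    rw [show k + 2 + 1 = k + 1 + 2 from rfl, hG, mul_add, ih, hsq,
      show k + 1 + 1 = k + 2 from rfl, show k + 1 + 2 = k + 2 + 1 from rfl]
    rw [hC]
    ring
end

section
/- For every integer n ≥ 1, every nonzero μ ∈ ℂ and every r ∈ ℂ, with A, B, x, W_n as defined, tr(W_n) = (2 − r)·(x² − 2 − r)·f_n(r)² + 2. -/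
open Polynomial

/-- `A = ((μ, 1), (0, μ⁻¹))`. -/
noncomputable def A (μ : ℂ) : Matrix (Fin 2) (Fin 2) ℂ := !![μ, 1; 0, μ⁻¹]

/-- `B = ((μ, 0), (2 − r, μ⁻¹))`. -/
noncomputable def B (μ r : ℂ) : Matrix (Fin 2) (Fin 2) ℂ := !![μ, 0; 2 - r, μ⁻¹]

/-- `W n = (A B⁻¹)ⁿ (A⁻¹ B)ⁿ`. -/
noncomputable def W (n : ℕ) (μ r : ℂ) : Matrix (Fin 2) (Fin 2) ℂ :=
  (A μ * (B μ r)⁻¹) ^ n * ((A μ)⁻¹ * B μ r) ^ n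

lemma f_identity (n : ℕ) : (f (n+1))^2 - X * f (n+1) * f n + (f n)^2 = 1 := by
  induction n with
  | zero => simp [f]
  | succ n ih => rw [f_rec]; linear_combination ih

lemma aeval_identity (r : ℂ) (n : ℕ) :
    (aeval r (f (n+1)))^2 - r * (aeval r (f (n+1))) * (aeval r (f n)) + (aeval r (f n))^2 = 1 := by
  have := congrArg (aeval r) (f_identity n)
  simpa using this

lemma aeval_rec (r : ℂ) (j : ℕ) :
    (aeval r (f (j+2)) : ℂ) = r * aeval r (f (j+1)) - aeval r (f j) := by
  rw [f_rec]; simp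

lemma pow_formula (M : Matrix (Fin 2) (Fin 2) ℂ) (r : ℂ) (hM : M * M = r • M - 1) (n : ℕ) :
    M ^ (n+1) = (aeval r (f (n+1))) • M - (aeval r (f n)) • 1 := by
  induction n with
  | zero => simp [f]
  | succ n ih =>
    rw [pow_succ, ih, aeval_rec]
    rw [sub_mul, smul_mul_assoc, smul_mul_assoc, hM, one_mul]
    rw [smul_sub, sub_smul, smul_smul]
    module

lemma Binv (μ r : ℂ) (hμ : μ ≠ 0) : (B μ r)⁻¹ = !![μ⁻¹, 0; -(2-r), μ] := by
  apply Matrix.inv_eq_right_inv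
  ext i j
  fin_cases i <;> fin_cases j <;>
    simp [B, Matrix.mul_apply, Fin.sum_univ_two] <;> field_simp <;> ring

lemma Ainv (μ : ℂ) (hμ : μ ≠ 0) : (A μ)⁻¹ = !![μ⁻¹, -1; 0, μ] := by
  apply Matrix.inv_eq_right_inv
  ext i j
  fin_cases i <;> fin_cases j <;>
    simp [A, Matrix.mul_apply, Fin.sum_univ_two] <;> field_simp

theorem trace_W (n : ℕ) (hn : 1 ≤ n) (μ : ℂ) (hμ : μ ≠ 0) (r : ℂ) :
    Matrix.trace (W n μ r)
      = (2 - r) * ((μ + μ⁻¹) ^ 2 - 2 - r) * (aeval r (f n)) ^ 2 + 2 := by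
  obtain ⟨m, rfl⟩ : ∃ m, n = m + 1 := ⟨n - 1, (Nat.succ_pred_eq_of_pos hn).symm⟩
  have h1 : μ * μ⁻¹ = 1 := mul_inv_cancel₀ hμ
  have hP2 : (A μ * (B μ r)⁻¹) * (A μ * (B μ r)⁻¹) = r • (A μ * (B μ r)⁻¹) - 1 := by
    rw [Binv μ r hμ]
    ext i j
    fin_cases i <;> fin_cases j <;>
      simp [A, Matrix.mul_apply, Fin.sum_univ_two, Matrix.one_apply] <;>
      field_simp <;> ring
  have hQ2 : ((A μ)⁻¹ * B μ r) * ((A μ)⁻¹ * B μ r) = r • ((A μ)⁻¹ * B μ r) - 1 := by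
    rw [Ainv μ hμ]
    ext i j
    fin_cases i <;> fin_cases j <;>
      simp [B, Matrix.mul_apply, Fin.sum_univ_two, Matrix.one_apply] <;>
      field_simp <;> ring
  have hid := aeval_identity r m
  rw [W, pow_formula _ r hP2 m, pow_formula _ r hQ2 m, Binv μ r hμ, Ainv μ hμ]
  rw [Matrix.trace_fin_two]
  simp only [A, B, Matrix.sub_apply, Matrix.smul_apply, Matrix.one_apply, Matrix.mul_apply,
    Fin.sum_univ_two, Matrix.cons_val', Matrix.cons_val_zero, Matrix.cons_val_one,
    Matrix.head_cons, Matrix.empty_val', Matrix.cons_val_fin_one, Matrix.head_fin_const,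
    smul_eq_mul]
  simp [Matrix.of_apply]
  field_simp
  linear_combination (2 * μ ^ 2) * hid
end

section
/- Fix an integer n ≥ 1, a nonzero μ ∈ ℂ and r ∈ ℂ, with A, B, W_n as defined. Set t = tr(W_n) and δ = tr(W_n·B·A⁻¹). Then for all integers d, e ≥ 0, tr(W_n^d·(BA⁻¹)^e) = f_e(r)·(f_d(t)·δ − r·f_{d−1}(t)) − f_{e−1}(r)·(f_{d+1}(t) − f_{d−1}(t)). In particular, for d = e = n this gives the trace of S₁S₂⁻¹ where S₁ = W_n^n and S₂ = (AB⁻¹)^n. -/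
open Polynomial

/-- The extension of `f` to integer indices via `f_{-k} = -f_k`; in particular
`fz (-1) = -1`, matching the convention `f_{−1} = u·f_0 − f_1 = −1`. -/
noncomputable def fz (k : ℤ) : Polynomial ℤ :=
  if 0 ≤ k then f k.toNat else -f (-k).toNat

/-- `t = tr(W n)`. -/
noncomputable def tW (n : ℕ) (μ r : ℂ) : ℂ := Matrix.trace (W n μ r)

/-- `δ = tr(W n · B · A⁻¹)`. -/
noncomputable def δW (n : ℕ) (μ r : ℂ) : ℂ := Matrix.trace (W n μ r * B μ r * (A μ)⁻¹)

lemma aeval_f_step (x : ℂ) (j : ℕ) :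
    aeval x (f (j + 2)) = x * aeval x (f (j + 1)) - aeval x (f j) := by
  rw [show f (j + 2) = X * f (j + 1) - f j from rfl]
  simp

lemma fz_succ_sub_one (d : ℕ) : fz ((d : ℤ) + 1 - 1) = f d := by
  simp [fz]

lemma fz_neg_one : fz (-1) = -1 := by
  norm_num [fz, f]

lemma aeval_f_succ (x : ℂ) (d : ℕ) :
    aeval x (f (d + 1)) = x * aeval x (f d) - aeval x (fz ((d : ℤ) - 1)) := by
  cases d with
  | zero => simp [f, fz_neg_one]
  | succ d =>
    rw [aeval_f_step, show ((d + 1 : ℕ) : ℤ) - 1 = (d : ℤ) + 1 - 1 by push_cast; ring,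
      fz_succ_sub_one]

/-- Cayley–Hamilton for a 2×2 matrix of determinant 1. -/
lemma ch (C : Matrix (Fin 2) (Fin 2) ℂ) (h : C.det = 1) :
    C ^ 2 = C.trace • C - 1 := by
  rw [Matrix.det_fin_two] at h
  generalize ha : C 0 0 = a at h
  generalize hb : C 0 1 = b at h
  generalize hc : C 1 0 = c at h
  generalize hd : C 1 1 = d at h
  rw [Matrix.eta_fin_two C, ha, hb, hc, hd]
  rw [pow_two, Matrix.mul_fin_two, Matrix.trace_fin_two_of, Matrix.one_fin_two,
    Matrix.smul_of]
  ext i j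
  fin_cases i <;> fin_cases j <;>
    simp [Matrix.sub_apply, smul_eq_mul] <;>
    first
      | ring1
      | linear_combination -h

lemma pow_eq_aux (C : Matrix (Fin 2) (Fin 2) ℂ) (h : C.det = 1) (d : ℕ) :
    C ^ (d + 1) = aeval C.trace (f (d + 1)) • C - aeval C.trace (f d) • 1 := by
  induction d with
  | zero => simp [f]
  | succ d ih =>
    have h2 := aeval_f_step C.trace d
    rw [pow_succ, ih, h2, sub_mul, smul_mul_assoc, smul_mul_assoc, one_mul,
      ← pow_two, ch C h]
    module

lemma pow_eq (C : Matrix (Fin 2) (Fin 2) ℂ) (h : C.det = 1) (d : ℕ) :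
    C ^ d = aeval C.trace (f d) • C
      - aeval C.trace (fz ((d : ℤ) - 1)) • (1 : Matrix (Fin 2) (Fin 2) ℂ) := by
  cases d with
  | zero =>
    have h1 : fz (-1) = -1 := fz_neg_one
    simp [f, h1]
  | succ d =>
    rw [show ((d + 1 : ℕ) : ℤ) - 1 = (d : ℤ) + 1 - 1 by push_cast; ring,
      fz_succ_sub_one]
    exact pow_eq_aux C h d

theorem trace_W_pow_BAinv_pow (n : ℕ) (hn : 1 ≤ n) (μ : ℂ) (hμ : μ ≠ 0) (r : ℂ) :
    (∀ d e : ℕ,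
      Matrix.trace ((W n μ r) ^ d * (B μ r * (A μ)⁻¹) ^ e)
        = aeval r (f e) * (aeval (tW n μ r) (f d) * δW n μ r
              - r * aeval (tW n μ r) (fz ((d : ℤ) - 1)))
          - aeval r (fz ((e : ℤ) - 1))
            * (aeval (tW n μ r) (f (d + 1)) - aeval (tW n μ r) (fz ((d : ℤ) - 1)))) ∧
    Matrix.trace (((W n μ r) ^ n) * ((A μ * (B μ r)⁻¹) ^ n)⁻¹)
        = aeval r (f n) * (aeval (tW n μ r) (f n) * δW n μ r
              - r * aeval (tW n μ r) (fz ((n : ℤ) - 1)))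
          - aeval r (fz ((n : ℤ) - 1))
            * (aeval (tW n μ r) (f (n + 1)) - aeval (tW n μ r) (fz ((n : ℤ) - 1))) := by
  have hdetA : (A μ).det = 1 := by
    simp [A, Matrix.det_fin_two_of]
    field_simp
  have hdetB : (B μ r).det = 1 := by
    simp [B, Matrix.det_fin_two_of]
    field_simp
  have hAinv : (A μ)⁻¹ = !![μ⁻¹, -1; 0, μ] := by
    apply Matrix.inv_eq_right_inv
    rw [A]
    ext i j
    fin_cases i <;> fin_cases j <;>
      simp [Matrix.mul_apply, Fin.sum_univ_two, Matrix.one_apply] <;>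
      field_simp
  have hdetAinv : ((A μ)⁻¹).det = 1 := by
    rw [Matrix.det_nonsing_inv, hdetA]; simp
  have hdetBinv : ((B μ r)⁻¹).det = 1 := by
    rw [Matrix.det_nonsing_inv, hdetB]; simp
  set V := B μ r * (A μ)⁻¹ with hV
  have hdetV : V.det = 1 := by
    rw [hV, Matrix.det_mul, hdetB, hdetAinv]; ring
  have hdetW : (W n μ r).det = 1 := by
    rw [W, Matrix.det_mul, Matrix.det_pow, Matrix.det_pow, Matrix.det_mul,
      Matrix.det_mul, hdetA, hdetB, hdetAinv, hdetBinv]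
    simp
  have htrV : V.trace = r := by
    rw [hV, hAinv, B]
    rw [Matrix.trace_fin_two]
    simp [Matrix.mul_apply, Fin.sum_univ_two]
    field_simp
    ring
  set M := W n μ r with hM
  have htrM : M.trace = tW n μ r := rfl
  have hδ : Matrix.trace (M * V) = δW n μ r := by
    rw [δW, mul_assoc, hV]
  have key : ∀ d e : ℕ,
      Matrix.trace (M ^ d * V ^ e)
        = aeval r (f e) * (aeval (tW n μ r) (f d) * δW n μ r
              - r * aeval (tW n μ r) (fz ((d : ℤ) - 1)))
          - aeval r (fz ((e : ℤ) - 1))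
            * (aeval (tW n μ r) (f (d + 1)) - aeval (tW n μ r) (fz ((d : ℤ) - 1))) := by
    intro d e
    have hMd := pow_eq M hdetW d
    have hVe := pow_eq V hdetV e
    rw [htrM] at hMd
    rw [htrV] at hVe
    set t := tW n μ r
    set a := aeval t (f d)
    set b := aeval t (fz ((d : ℤ) - 1))
    set c := aeval r (f e)
    set g := aeval r (fz ((e : ℤ) - 1))
    have hstep : aeval t (f (d + 1)) = t * a - b := aeval_f_succ t d
    rw [hMd, hVe]
    have expand : (a • M - b • 1) * (c • V - g • 1)
        = (a * c) • (M * V) - (a * g) • M - (b * c) • V + (b * g) • (1 : Matrix (Fin 2) (Fin 2) ℂ) := by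
      rw [sub_mul, mul_sub, mul_sub]
      simp only [smul_mul_assoc, mul_smul_comm, mul_one, one_mul, smul_smul]
      module
    rw [expand]
    simp only [Matrix.trace_add, Matrix.trace_sub, Matrix.trace_smul, smul_eq_mul]
    rw [hδ, htrM, htrV, Matrix.trace_one, hstep]
    simp only [Fintype.card_fin]
    push_cast
    ring
  constructor
  · intro d e
    exact key d e
  · have hinv : ((A μ * (B μ r)⁻¹) ^ n)⁻¹ = V ^ n := by
      rw [← Matrix.inv_pow']
      congr 1
      rw [Matrix.mul_inv_rev, Matrix.nonsing_inv_nonsing_inv]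
      rw [hdetB]; exact isUnit_one
    rw [hinv]
    exact key n n
end
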